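/- arXiv:2104.13698 — 6 statements merged into one kernel-verified Lean document; each statement's English description precedes it below -/
import Mathlib

section
/- Let X be a compact Hausdorff space and let Y be a subspace of X such that: (i) X is first-countable at every point of Y (every point of Y has a countable neighbourhood base in X); (ii) Y, with the subspace topology, is initially ω₁-compact; and (iii) every compact subset of X ∖ Y is finite. Then X is ω₁-free: no injective ω₁-sequence in X converges. -/
open Ordinal Topology

/-- The first uncountable ordinal `ω₁`, as a (well-ordered) type. -/
abbrev Omega1 : Type := (Ordinal.omega 1).ToType

/-- An `ω₁`-sequence converges to `p` if every neighbourhood of `p`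
contains a tail of the sequence. -/
def ConvergesTo {X : Type*} [TopologicalSpace X] (x : Omega1 → X) (p : X) : Prop :=
  ∀ U ∈ nhds p, ∃ α : Omega1, ∀ β : Omega1, α ≤ β → x β ∈ U

/-- A space is initially `ω₁`-compact if every open cover of cardinality
at most `ℵ₁` has a finite subcover. -/
def InitiallyOmega1Compact (Y : Type*) [TopologicalSpace Y] : Prop :=
  ∀ 𝒞 : Set (Set Y), (∀ U ∈ 𝒞, IsOpen U) → Cardinal.mk 𝒞 ≤ Cardinal.aleph 1 →
    ⋃₀ 𝒞 = Set.univ → ∃ F ⊆ 𝒞, F.Finite ∧ ⋃₀ F = Set.univ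


instance : IsWellOrder Omega1 (· < ·) := isWellOrder_lt

lemma omega1_mk : Cardinal.mk Omega1 = Cardinal.aleph 1 := by
  rw [Cardinal.mk_toType, Ordinal.card_omega]

lemma omega1_Iio_countable (a : Omega1) : (Set.Iio a).Countable := by
  rw [Cardinal.countable_iff_lt_aleph_one]
  have h : ∀ i : (Cardinal.aleph 1).ord.ToType, Cardinal.mk (Set.Iio i) < Cardinal.aleph 1 :=
    fun i => Cardinal.mk_Iio_toType_ord_lt i
  rw [Cardinal.ord_aleph] at h
  exact h a

lemma omega1_bdd {s : Set Omega1} (hs : s.Countable) : ∃ a : Omega1, ∀ b ∈ s, b ≤ a := by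
  have hcof : Cardinal.mk s < (Ordinal.omega 1).cof := by
    rw [← Cardinal.ord_aleph, Cardinal.isRegular_aleph_one.cof_eq]
    exact (Cardinal.countable_iff_lt_aleph_one s).mp hs
  have hsup : (⨆ b : s, Ordinal.typein (α := Omega1) (· < ·) b.1) < Ordinal.omega 1 :=
    Ordinal.iSup_lt_ord hcof (fun b => Ordinal.typein_lt_self b.1)
  set e := (Ordinal.ToType.mk (o := Ordinal.omega 1))
  refine ⟨e ⟨_, hsup⟩, fun b hb => ?_⟩
  have h2 : ((e.symm b : Set.Iio (Ordinal.omega 1)) : Ordinal)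
      ≤ ⨆ b : s, Ordinal.typein (α := Omega1) (· < ·) b.1 :=
    Ordinal.le_iSup _ (⟨b, hb⟩ : s)
  calc b = e (e.symm b) := (e.apply_symm_apply b).symm
    _ ≤ e ⟨_, hsup⟩ := e.monotone (Subtype.coe_le_coe.mp h2)

lemma omega1_tail_infinite (a : Omega1) : {β : Omega1 | a ≤ β}.Infinite := by
  intro hfin
  have huniv : (Set.univ : Set Omega1).Countable := by
    have : (Set.univ : Set Omega1) = Set.Iio a ∪ {β | a ≤ β} := by
      ext β; simp [le_or_gt a β, or_comm]
    rw [this]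
    exact (omega1_Iio_countable a).union hfin.countable
  have := (Cardinal.countable_iff_lt_aleph_one _).mp huniv
  rw [Cardinal.mk_univ, omega1_mk] at this
  exact lt_irrefl _ this

/-- A compact Hausdorff space that is first countable at the points of an initially
`ω₁`-compact subspace `Y`, and all of whose compact subsets disjoint from `Y` are
finite, is `ω₁`-free. -/
theorem stmt4 {X : Type*} [TopologicalSpace X] [CompactSpace X] [T2Space X]
    (Y : Set X)
    (h1 : ∀ y ∈ Y, (nhds y).IsCountablyGenerated)
    (h2 : InitiallyOmega1Compact Y)
    (h3 : ∀ K : Set X, K ⊆ Yᶜ → IsCompact K → K.Finite) :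
    ∀ x : Omega1 → X, Function.Injective x → ∀ p : X, ¬ ConvergesTo x p := by
  intro x hx p hconv
  set T : Omega1 → Set X := fun α => x '' {β | α ≤ β} with hT
  have hTanti : ∀ {α α' : Omega1}, α ≤ α' → T α' ⊆ T α := by
    intro α α' h
    exact Set.image_mono (f := x) (fun β hβ => le_trans h hβ)
  have hp_unique : ∀ z : X, (∀ α, z ∈ closure (T α)) → z = p := by
    intro z hz
    by_contra hne
    obtain ⟨U, V, hU, hV, hpU, hzV, hUV⟩ := t2_separation (Ne.symm hne)
    obtain ⟨α, hα⟩ := hconv U (hU.mem_nhds hpU)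
    obtain ⟨w, hwV, β, hβ, rfl⟩ := _root_.mem_closure_iff.mp (hz α) V hV hzV
    exact Set.disjoint_left.mp hUV (hα β hβ) hwV
  by_cases hpY : p ∈ Y
  · -- first countable at p: the tail is eventually constant, contradicting injectivity
    haveI := h1 p hpY
    obtain ⟨b, hb⟩ := (nhds p).exists_antitone_basis
    have hbm : ∀ n, b n ∈ nhds p := fun n => hb.mem n
    choose αn hαn using fun n => hconv (b n) (hbm n)
    obtain ⟨α, hα⟩ := omega1_bdd (Set.countable_range αn)
    have hxp : ∀ β, α ≤ β → x β = p := by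
      intro β hβ
      by_contra hne
      have hc : {x β}ᶜ ∈ nhds p := compl_singleton_mem_nhds fun h => hne h.symm
      obtain ⟨n, -, hn⟩ := hb.toHasBasis.mem_iff.mp hc
      exact hn (hαn n β (le_trans (hα _ (Set.mem_range_self n)) hβ)) rfl
    obtain ⟨β₁, h₁, β₂, h₂, hne⟩ := (omega1_tail_infinite α).nontrivial
    exact hne (hx ((hxp β₁ h₁).trans (hxp β₂ h₂).symm))
  · by_cases hex : ∃ α, ∀ q ∈ closure (T α), q ∉ Y
    · -- a tail closure avoiding Y: compact, so finite, but tails are infinite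
      obtain ⟨α, hα⟩ := hex
      have hK : IsCompact (closure (T α)) := isClosed_closure.isCompact
      have hfin : (closure (T α)).Finite := h3 _ (fun q hq => hα q hq) hK
      have hinf : (T α).Infinite :=
        (omega1_tail_infinite α).image (Function.Injective.injOn hx)
      exact hinf (hfin.subset subset_closure)
    · -- every tail closure meets Y; use initial ω₁-compactness of Y
      push_neg at hex
      choose y hyK hyY using hex
      set y' : Omega1 → Y := fun α => ⟨y α, hyY α⟩ with hy'
      set W : Omega1 → Set Y := fun α => (closure (y' '' {β | α ≤ β}))ᶜ with hW
      have hWopen : ∀ α, IsOpen (W α) := fun α => isOpen_compl_iff.mpr isClosed_closure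
      have hWmono : ∀ {α α' : Omega1}, α ≤ α' → W α ⊆ W α' := by
        intro α α' h
        exact Set.compl_subset_compl.mpr
          (closure_mono (Set.image_mono (f := y') (fun β hβ => le_trans h hβ)))
    -- the W's cannot cover Y
      have hnocov : ⋃₀ (Set.range W) ≠ Set.univ := by
        intro hcov
        obtain ⟨F, hFsub, hFfin, hFunion⟩ := h2 (Set.range W)
          (by rintro U ⟨α, rfl⟩; exact hWopen α)
          (by
            have h := Cardinal.mk_range_le_lift (f := W)
            rw [omega1_mk, Cardinal.lift_aleph, Ordinal.lift_one] at h
            rwa [Cardinal.lift_uzero] at h) hcov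
        haveI : Nonempty Omega1 :=
          Ordinal.toType_nonempty_iff_ne_zero.mpr (Ordinal.omega_pos 1).ne'
        have hFne : F.Nonempty := by
          rcases Set.eq_empty_or_nonempty F with rfl | h
          · rw [Set.sUnion_empty] at hFunion
            exact absurd (hFunion ▸ Set.mem_univ (y' (Classical.arbitrary Omega1)))
              (Set.notMem_empty _)
          · exact h
        haveI : Finite F := hFfin
        haveI : Nonempty F := hFne.to_subtype
        choose g hg using fun (U : F) => hFsub U.2
        obtain ⟨m, hm⟩ := Finite.exists_max g
        have hsub : ⋃₀ F ⊆ W (g m) := by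
          rintro q ⟨U, hU, hq⟩
          have : U = W (g ⟨U, hU⟩) := (hg ⟨U, hU⟩).symm
          exact hWmono (hm ⟨U, hU⟩) (this ▸ hq)
        have : y' (g m) ∈ W (g m) := hsub (hFunion ▸ Set.mem_univ _)
        exact this (subset_closure (Set.mem_image_of_mem y' (Set.mem_setOf.mpr le_rfl)))
      -- so some z ∈ Y is in the closure of every tail of y', hence z = p ∈ Y
      have hz : ∃ z : Y, ∀ α, z ∈ closure (y' '' {β | α ≤ β}) := by
        by_contra hno
        push_neg at hno
        apply hnocov
        ext q
        simp only [Set.mem_sUnion, Set.mem_range, Set.mem_univ, iff_true]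
        obtain ⟨α, hα⟩ := hno q
        exact ⟨W α, ⟨α, rfl⟩, hα⟩
      obtain ⟨z, hz⟩ := hz
      have hzX : ∀ α, (z : X) ∈ closure (T α) := by
        intro α
        have h1' : (z : X) ∈ closure ((Subtype.val : Y → X) '' (y' '' {β | α ≤ β})) :=
          closure_subtype.mp (hz α)
        refine closure_minimal ?_ isClosed_closure h1'
        rintro q ⟨-, ⟨β, hβ, rfl⟩, rfl⟩
        exact closure_mono (hTanti hβ) (hyK β)
      exact hpY (hp_unique (z : X) hzX ▸ z.2)
end

section
/- In a compact Hausdorff space of countable tightness there is no free ω₁-sequence. -/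
/-!
Compactness gives a cluster point `p` of the sequence, i.e. a point in the closure of every
tail `{x_β : β ≥ α}`. By countable tightness `p` already lies in the closure of countably many
terms, and since `ω₁` has uncountable cofinality these all come before some `α`. Then `p` lies
in both closures at `α`.
-/

open Ordinal Topology

/-- An `ω₁`-sequence is free if for every `α` the initial part `{x_β : β < α}` and
the final part `{x_β : β ≥ α}` have disjoint closures. -/
def FreeSeq {X : Type*} [TopologicalSpace X] (x : Omega1 → X) : Prop :=
  ∀ α : Omega1,
    Disjoint (closure (x '' {β : Omega1 | β < α})) (closure (x '' {β : Omega1 | α ≤ β}))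

/-- A space has countable tightness if every point in the closure of a set `A` is in the
closure of a countable subset of `A`. -/
def CountableTightness (X : Type*) [TopologicalSpace X] : Prop :=
  ∀ A : Set X, ∀ p ∈ closure A, ∃ B ⊆ A, B.Countable ∧ p ∈ closure B

theorem CountableTightness.exists_countable_mem_closure_image {X ι : Type*} [TopologicalSpace X]
    (h : CountableTightness X) {x : ι → X} {p : X} (hp : p ∈ closure (Set.range x)) :
    ∃ s : Set ι, s.Countable ∧ p ∈ closure (x '' s) := by
  obtain ⟨B, hBx, hBc, hpB⟩ := h _ p hp
  choose g hg using fun b : B => hBx b.2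
  have : Countable B := hBc.to_subtype
  refine ⟨Set.range g, Set.countable_range g, closure_mono (fun b hb => ?_) hpB⟩
  exact ⟨g ⟨b, hb⟩, Set.mem_range_self _, hg _⟩

namespace Omega1

instance : Nonempty Omega1 :=
  Ordinal.nonempty_toType_iff.2 (Ordinal.omega_pos 1).ne'

theorem exists_gt_of_countable {s : Set Omega1} (hs : s.Countable) :
    ∃ α, ∀ β ∈ s, β < α := by
  by_contra! hcofinal
  have hcof := Order.cof_le hcofinal
  rw [Ordinal.cof_toType, Cardinal.cof_omega_one] at hcof
  exact (hcof.trans (Cardinal.le_aleph0_iff_set_countable.2 hs)).not_gt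
    Cardinal.aleph0_lt_aleph_one

end Omega1

theorem stmt6_general {X : Type*} [TopologicalSpace X] [CompactSpace X]
    (h : CountableTightness X) (x : Omega1 → X) : ¬ FreeSeq x := by
  intro hfree
  obtain ⟨p, hp⟩ := exists_clusterPt_of_compactSpace (Filter.map x Filter.atTop)
  have hp_tails : ∀ α, p ∈ closure (x '' Set.Ici α) :=
    mapClusterPt_atTop_iff_forall_mem_closure.1 hp
  obtain ⟨s, hs, hps⟩ := h.exists_countable_mem_closure_image
    (closure_mono (Set.image_subset_range _ _) (hp_tails (Classical.arbitrary _)))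
  obtain ⟨α, hα⟩ := Omega1.exists_gt_of_countable hs
  exact Set.disjoint_left.1 (hfree α) (closure_mono (Set.image_mono hα) hps) (hp_tails α)

/-- In a compact Hausdorff space of countable tightness there is no free `ω₁`-sequence. -/
theorem stmt6 {X : Type*} [TopologicalSpace X] [CompactSpace X] [T2Space X]
    (h : CountableTightness X) (x : Omega1 → X) : ¬ FreeSeq x :=
  stmt6_general h x
end

section
/- In a Hausdorff topological space, the sequential closure of a countable set has cardinality at most the continuum 𝔠 = 2^{ℵ₀}. -/
open Topology Cardinal Ordinal Set Filter

noncomputable def seqIter {X : Type u} [TopologicalSpace X] (A : Set X) : Ordinal.{u} → Set X :=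
  fun o => A ∪ seqClosure (⋃ o' : {o' : Ordinal.{u} // o' < o}, seqIter A o')
termination_by o => o
decreasing_by exact o'.2

theorem seqIter_def {X : Type u} [TopologicalSpace X] (A : Set X) (o : Ordinal.{u}) :
    seqIter A o = A ∪ seqClosure (⋃ o' : {o' : Ordinal.{u} // o' < o}, seqIter A o') := by
  rw [seqIter]

theorem subset_seqIter {X : Type u} [TopologicalSpace X] (A : Set X) (o : Ordinal.{u}) :
    A ⊆ seqIter A o := by rw [seqIter_def]; exact Set.subset_union_left

theorem seqClosure_mono' {X : Type u} [TopologicalSpace X] {S T : Set X} (h : S ⊆ T) :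
    seqClosure S ⊆ seqClosure T := fun _ ⟨u, hu, hp⟩ => ⟨u, fun n => h (hu n), hp⟩

theorem seqIter_mono {X : Type u} [TopologicalSpace X] (A : Set X) {o₁ o₂ : Ordinal.{u}}
    (h : o₁ ≤ o₂) : seqIter A o₁ ⊆ seqIter A o₂ := by
  rw [seqIter_def A o₁, seqIter_def A o₂]
  refine Set.union_subset_union_right _ (seqClosure_mono' ?_)
  exact Set.iUnion_subset fun o' => Set.subset_iUnion_of_subset ⟨o', o'.2.trans_le h⟩ subset_rfl

theorem seqIter_succ_supset {X : Type u} [TopologicalSpace X] (A : Set X) (o : Ordinal.{u}) :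
    seqClosure (seqIter A o) ⊆ seqIter A (o + 1) := by
  rw [seqIter_def A (o + 1)]
  refine Set.subset_union_of_subset_right (seqClosure_mono' ?_) _
  exact Set.subset_iUnion_of_subset ⟨o, Order.lt_succ o⟩ subset_rfl

theorem mk_seqClosure_le {X : Type u} [TopologicalSpace X] [T2Space X] (S : Set X) :
    #(seqClosure S) ≤ #S ^ aleph0.{u} := by
  have key : ∀ p : seqClosure S, ∃ u : ℕ → S, Tendsto (fun n => (u n : X)) atTop (𝓝 (p : X)) := by
    rintro ⟨p, u, hu, hup⟩
    exact ⟨fun n => ⟨u n, hu n⟩, hup⟩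
  choose f hf using key
  have hinj : Function.Injective f := by
    intro p q hpq
    have := hf p
    rw [hpq] at this
    exact Subtype.ext (tendsto_nhds_unique this (hf q))
  calc #(seqClosure S) ≤ #(ℕ → S) := Cardinal.mk_le_of_injective hinj
    _ = #S ^ aleph0.{u} := by
        rw [Cardinal.mk_arrow]; simp

theorem mk_seqIter_le {X : Type u} [TopologicalSpace X] [T2Space X] (A : Set X)
    (hA : A.Countable) : ∀ o : Ordinal.{u}, o < (aleph 1).ord → #(seqIter A o) ≤ continuum.{u} := by
  intro o
  induction o using Ordinal.induction with
  | h o IH =>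
    intro ho
    rw [seqIter_def]
    have hU : (⋃ o' : {o' : Ordinal.{u} // o' < o}, seqIter A o') =
        ⋃ i : o.ToType, seqIter A ((Ordinal.ToType.mk (o := o)).symm i : Ordinal) := by
      ext x
      simp only [Set.mem_iUnion]
      constructor
      · rintro ⟨⟨o', ho'⟩, hx⟩
        exact ⟨Ordinal.ToType.mk (o := o) ⟨o', ho'⟩, by simpa using hx⟩
      · rintro ⟨i, hx⟩
        exact ⟨⟨_, ((Ordinal.ToType.mk (o := o)).symm i).2⟩, hx⟩
    have hcard_o : #o.ToType ≤ aleph0.{u} := by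
      rw [Cardinal.mk_toType]
      have := (Cardinal.lt_ord.mp ho)
      rw [← Cardinal.succ_aleph0, Order.lt_succ_iff] at this
      exact this
    have hUle : #(⋃ o' : {o' : Ordinal.{u} // o' < o}, seqIter A o' : Set X) ≤ continuum.{u} := by
      rw [hU]
      refine (Cardinal.mk_iUnion_le _).trans ?_
      have h1 : ⨆ i : o.ToType, #(seqIter A ((Ordinal.ToType.mk (o := o)).symm i : Ordinal)) ≤
          continuum.{u} := by
        refine ciSup_le' fun i => ?_
        exact IH _ ((Ordinal.ToType.mk (o := o)).symm i).2 (((Ordinal.ToType.mk (o := o)).symm i).2.trans ho)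
      calc #o.ToType * _ ≤ aleph0.{u} * continuum.{u} :=
            mul_le_mul' hcard_o h1
        _ ≤ continuum.{u} := by
            rw [Cardinal.aleph0_mul_eq aleph0_le_continuum]
    refine (Cardinal.mk_union_le _ _).trans ?_
    have h2 : #(seqClosure (⋃ o' : {o' : Ordinal.{u} // o' < o}, seqIter A o') : Set X) ≤
        continuum.{u} := by
      refine (mk_seqClosure_le _).trans ?_
      calc _ ≤ continuum.{u} ^ aleph0.{u} := by
            exact Cardinal.power_le_power_right hUle
        _ = continuum.{u} := continuum_power_aleph0
    have hAle : #A ≤ continuum.{u} := hA.le_aleph0.trans aleph0_le_continuum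
    calc #A + _ ≤ continuum.{u} + continuum.{u} := add_le_add hAle h2
      _ = continuum.{u} := by simp

/-- The sequential closure of a set `A`: the smallest sequentially closed set
containing `A`. -/
def SeqClosure {X : Type*} [TopologicalSpace X] (A : Set X) : Set X :=
  ⋂₀ {S : Set X | A ⊆ S ∧ IsSeqClosed S}

/-- In a Hausdorff space the sequential closure of a countable set has cardinality
at most the continuum. -/
theorem stmt8 {X : Type*} [TopologicalSpace X] [T2Space X]
    (A : Set X) (hA : A.Countable) :
    Cardinal.mk (SeqClosure A) ≤ Cardinal.continuum := by
  set w1 := (aleph 1).ord with hw1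
  have hlim : Order.IsSuccLimit w1 := isSuccLimit_ord (aleph0_le_aleph 1)
  set C : Set X := ⋃ i : w1.ToType, seqIter A ((Ordinal.ToType.mk (o := w1)).symm i : Ordinal) with hC
  have hmem : ∀ o : Ordinal, (h : o < w1) → seqIter A o ⊆ C := by
    intro o h
    refine Set.subset_iUnion_of_subset (Ordinal.ToType.mk (o := w1) ⟨o, h⟩) ?_
    simp
  have hAC : A ⊆ C := (subset_seqIter A 0).trans (hmem 0 hlim.pos)
  have hclosed : IsSeqClosed C := by
    intro u p hu hup
    have hex : ∀ n, ∃ o : Ordinal, o < w1 ∧ u n ∈ seqIter A o := by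
      intro n
      obtain ⟨_, ⟨i, rfl⟩, hi⟩ := hu n
      exact ⟨_, ((Ordinal.ToType.mk (o := w1)).symm i).2, hi⟩
    choose o ho hmemo using hex
    have hβ : (⨆ n, o n) < w1 := by
      refine iSup_lt_ord_lift_of_isRegular isRegular_aleph_one ?_ ho
      simpa using aleph0_lt_aleph_one
    have hall : ∀ n, u n ∈ seqIter A (⨆ n, o n) := fun n =>
      seqIter_mono A (Ordinal.le_iSup o n) (hmemo n)
    have : p ∈ seqClosure (seqIter A (⨆ n, o n)) := ⟨u, hall, hup⟩
    exact hmem _ (hlim.succ_lt hβ) (seqIter_succ_supset A _ this)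
  have hsub : SeqClosure A ⊆ C := Set.sInter_subset_of_mem ⟨hAC, hclosed⟩
  refine (Cardinal.mk_le_mk_of_subset hsub).trans ?_
  refine (Cardinal.mk_iUnion_le _).trans ?_
  have h1 : ⨆ i : w1.ToType, #(seqIter A ((Ordinal.ToType.mk (o := w1)).symm i : Ordinal)) ≤
      continuum := by
    refine ciSup_le' fun i => ?_
    exact mk_seqIter_le A hA _ ((Ordinal.ToType.mk (o := w1)).symm i).2
  calc #w1.ToType * _ ≤ aleph 1 * continuum := by
        rw [Cardinal.mk_toType, Cardinal.card_ord]; exact mul_le_mul' le_rfl h1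
    _ = continuum := by
        rw [Cardinal.mul_eq_right aleph0_le_continuum aleph_one_le_continuum]
        exact (aleph_pos 1).ne'
end

section
/- Every separable sequential Hausdorff space has cardinality at most the continuum 𝔠 = 2^{ℵ₀}. In particular, a compact Hausdorff separable sequential space has cardinality at most 𝔠. -/
open Topology TopologicalSpace Filter Set Cardinal Ordinal

universe u

noncomputable section SeqCard

variable {X : Type u} [TopologicalSpace X]

/-- Transfinite iteration of sequential closure, indexed by `ω₁`. -/
def seqFam (D : Set X) : (Cardinal.aleph 1 : Cardinal.{u}).ord.ToType → Set X :=
  fun i => D ∪ ⋃ j : Set.Iio i, seqClosure (seqFam D j.1)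
termination_by i => i
decreasing_by exact j.2

lemma seqFam_def (D : Set X) (i) :
    seqFam D i = D ∪ ⋃ j : Set.Iio i, seqClosure (seqFam D j.1) := by
  rw [seqFam]

lemma subset_seqFam (D : Set X) (i) : D ⊆ seqFam D i := by
  rw [seqFam_def]; exact subset_union_left

lemma seqClosure_seqFam_subset (D : Set X) {j i} (h : j < i) :
    seqClosure (seqFam D j) ⊆ seqFam D i := by
  rw [seqFam_def D i]
  exact subset_union_of_subset_right (subset_iUnion (fun j : Set.Iio i => seqClosure (seqFam D j.1)) ⟨j, h⟩) _

lemma seqFam_subset_of_lt (D : Set X) {j i} (h : j < i) : seqFam D j ⊆ seqFam D i :=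
  subset_seqClosure.trans (seqClosure_seqFam_subset D h)

lemma exists_bound (g : ℕ → (Cardinal.aleph 1 : Cardinal.{u}).ord.ToType) :
    ∃ i, ∀ n, g n < i := by
  set e := Ordinal.ToType.mk (o := (Cardinal.aleph 1 : Cardinal.{u}).ord)
  have hlim : Order.IsSuccLimit ((Cardinal.aleph 1 : Cardinal.{u}).ord) :=
    Cardinal.isSuccLimit_ord (aleph0_le_aleph 1)
  have hsup : (⨆ n, (e.symm (g n)).1 + 1) < (Cardinal.aleph 1 : Cardinal.{u}).ord := by
    apply Ordinal.iSup_lt_ord_lift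
    · rw [Cardinal.mk_nat, Cardinal.lift_aleph0, Cardinal.isRegular_aleph_one.cof_eq]
      exact Cardinal.aleph0_lt_aleph_one
    · exact fun n => by rw [Ordinal.add_one_eq_succ]; exact hlim.succ_lt (e.symm (g n)).2
  refine ⟨e ⟨_, hsup⟩, fun n => ?_⟩
  have hn1 : (e.symm (g n)).1 < (e.symm (g n)).1 + 1 := by
    rw [Ordinal.add_one_eq_succ]; exact Order.lt_succ _
  have h1 : (e.symm (g n)).1 < ⨆ n, (e.symm (g n)).1 + 1 :=
    lt_of_lt_of_le hn1 (Ordinal.le_iSup (fun n => (e.symm (g n)).1 + 1) n)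
  have : e.symm (g n) < ⟨_, hsup⟩ := h1
  calc g n = e (e.symm (g n)) := (e.apply_symm_apply _).symm
    _ < e ⟨_, hsup⟩ := e.strictMono this

lemma seqClosure_card_le [T2Space X] {s : Set X} (hs : #s ≤ 𝔠) :
    #(seqClosure s) ≤ 𝔠 := by
  classical
  have key : ∀ x : seqClosure s, ∃ u : ℕ → s, Tendsto (fun n => (u n : X)) atTop (𝓝 x.1) := by
    rintro ⟨x, u, hu, hux⟩
    exact ⟨fun n => ⟨u n, hu n⟩, hux⟩
  choose f hf using key
  have hinj : Function.Injective f := fun x y hxy => by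
    apply Subtype.ext
    exact tendsto_nhds_unique (hf x) (hxy ▸ hf y)
  calc #(seqClosure s) ≤ #(ℕ → s) := Cardinal.mk_le_of_injective hinj
    _ = (#s) ^ (ℵ₀ : Cardinal.{u}) := by
        rw [Cardinal.mk_arrow]; simp
    _ ≤ 𝔠 ^ (ℵ₀ : Cardinal.{u}) := Cardinal.power_le_power_right hs
    _ = 𝔠 := Cardinal.continuum_power_aleph0

lemma seqFam_card_le [T2Space X] {D : Set X} (hD : #D ≤ ℵ₀) (i) :
    #(seqFam D i) ≤ 𝔠 := by
  induction i using WellFoundedLT.induction with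
  | _ i IH =>
    rw [seqFam_def]
    calc #(↥(D ∪ ⋃ j : Set.Iio i, seqClosure (seqFam D j.1)))
        ≤ #D + #(⋃ j : Set.Iio i, seqClosure (seqFam D j.1)) := Cardinal.mk_union_le _ _
      _ ≤ 𝔠 + 𝔠 := by
          refine add_le_add (hD.trans Cardinal.aleph0_le_continuum) ?_
          refine (Cardinal.mk_iUnion_le _).trans ?_
          have h1 : #(Set.Iio i) ≤ 𝔠 :=
            (Cardinal.mk_Iio_ord_toType i).le.trans Cardinal.aleph_one_le_continuum
          have h2 : (⨆ j : Set.Iio i, #(seqClosure (seqFam D j.1))) ≤ 𝔠 := by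
            rcases isEmpty_or_nonempty (Set.Iio i) with h | h
            · simp [ciSup_of_empty]
            · exact ciSup_le' fun j => seqClosure_card_le (IH j.1 j.2)
          calc #(Set.Iio i) * (⨆ j : Set.Iio i, #(seqClosure (seqFam D j.1))) ≤ 𝔠 * 𝔠 :=
                mul_le_mul' h1 h2
            _ = 𝔠 := Cardinal.continuum_mul_self
      _ = 𝔠 := Cardinal.continuum_add_self

end SeqCard

theorem sep_seq_t2 (X : Type u) [TopologicalSpace X] [T2Space X] [SeparableSpace X]
    [SequentialSpace X] : Cardinal.mk X ≤ Cardinal.continuum := by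
  obtain ⟨D, hDc, hDd⟩ := exists_countable_dense X
  haveI : Nonempty (Cardinal.aleph 1 : Cardinal.{u}).ord.ToType := by
    rw [Ordinal.toType_nonempty_iff_ne_zero, Ne, Cardinal.ord_eq_zero]
    exact (Cardinal.aleph_pos 1).ne'
  set S : Set X := ⋃ i, seqFam D i with hS
  have hseq : IsSeqClosed S := by
    intro u p hu hp
    have : ∀ n, ∃ i, u n ∈ seqFam D i := fun n => mem_iUnion.1 (hu n)
    choose g hg using this
    obtain ⟨i, hi⟩ := exists_bound g
    have hmem : p ∈ seqClosure (seqFam D i) :=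
      ⟨u, fun n => seqFam_subset_of_lt D (hi n) (hg n), hp⟩
    haveI : NoMaxOrder (Cardinal.aleph 1 : Cardinal.{u}).ord.ToType :=
      Ordinal.toType_noMax_of_succ_lt (fun _ => (Cardinal.isSuccLimit_ord (aleph0_le_aleph 1)).succ_lt)
    obtain ⟨i', hi'⟩ := exists_gt i
    exact mem_iUnion.2 ⟨i', seqClosure_seqFam_subset D hi' hmem⟩
  have hDS : D ⊆ S := (subset_seqFam D (Classical.arbitrary _)).trans (subset_iUnion _ _)
  have huniv : S = Set.univ := by
    rw [← hseq.isClosed.closure_eq]; show _ = Set.univ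
    exact (hDd.mono hDS).closure_eq
  have hD : #D ≤ ℵ₀ := Cardinal.mk_le_aleph0_iff.2 hDc
  calc #X = #S := by rw [huniv, Cardinal.mk_univ]
    _ ≤ #(Cardinal.aleph 1 : Cardinal.{u}).ord.ToType * ⨆ i, #(seqFam D i) :=
        Cardinal.mk_iUnion_le _
    _ ≤ 𝔠 * 𝔠 := by
        refine mul_le_mul' ?_ (ciSup_le' fun i => seqFam_card_le hD i)
        rw [Cardinal.mk_ord_toType]
        exact Cardinal.aleph_one_le_continuum
    _ = 𝔠 := Cardinal.continuum_mul_self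

/-- A separable sequential Hausdorff space has cardinality at most the continuum;
in particular this holds for compact Hausdorff separable sequential spaces. -/
theorem stmt9 :
    (∀ (X : Type u) [TopologicalSpace X] [T2Space X] [SeparableSpace X]
      [SequentialSpace X], Cardinal.mk X ≤ Cardinal.continuum) ∧
    (∀ (X : Type u) [TopologicalSpace X] [CompactSpace X] [T2Space X] [SeparableSpace X]
      [SequentialSpace X], Cardinal.mk X ≤ Cardinal.continuum) := by
  exact ⟨fun X _ _ _ _ => sep_seq_t2 X, fun X _ _ _ _ _ => sep_seq_t2 X⟩
end

section
/- Let X be a compact Hausdorff sequential space, let c be a countably infinite subset of X, and let x ∈ X be such that every injective sequence of points of c that converges in X converges to x. Then the set c itself converges to x, i.e., every neighbourhood of x contains all but finitely many elements of c. -/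
open Topology Filter

/-- An infinite set `A` converges to `p` if every neighbourhood of `p` contains
all but finitely many elements of `A`. -/
def SetConvergesTo {X : Type*} [TopologicalSpace X] (A : Set X) (p : X) : Prop :=
  ∀ U ∈ nhds p, (A \ U).Finite

/-- In a compact sequential Hausdorff space, every sequence has a convergent
subsequence. -/
theorem aux_seq_compact {X : Type*} [TopologicalSpace X] [CompactSpace X] [T2Space X]
    [SequentialSpace X] (f : ℕ → X) :
    ∃ φ : ℕ → ℕ, StrictMono φ ∧ ∃ y : X, Tendsto (f ∘ φ) atTop (nhds y) := by
  by_contra hno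
  push_neg at hno
  -- tail sets
  set T : ℕ → Set X := fun n => f '' Set.Ici n with hT
  have hseq : ∀ n, IsSeqClosed (T n) := by
    intro n g y hg hgy
    choose m hm hfm using hg
    by_cases hfin : ∃ v, {k | m k = v}.Infinite
    · obtain ⟨v, hv⟩ := hfin
      have hfreq : ∃ᶠ k in atTop, m k = v := Nat.frequently_atTop_iff_infinite.mpr hv
      obtain ⟨ψ, hψ, hψv⟩ := extraction_of_frequently_atTop hfreq
      have h1 : Tendsto (g ∘ ψ) atTop (nhds y) := hgy.comp hψ.tendsto_atTop
      have h2 : Tendsto (g ∘ ψ) atTop (nhds (f v)) := by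
        have : (g ∘ ψ) = fun _ => f v := by
          funext k
          simp only [Function.comp_apply]
          rw [← hfm (ψ k), hψv k]
        rw [this]; exact tendsto_const_nhds
      have hyv : y = f v := tendsto_nhds_unique h1 h2
      exact hyv ▸ ⟨v, hψv 0 ▸ hm (ψ 0), rfl⟩
    · push_neg at hfin
      have hm_tendsto : Tendsto m atTop atTop := by
        rw [tendsto_atTop]
        intro b
        rw [eventually_atTop]
        have : {k | m k < b}.Finite := by
          have : {k | m k < b} ⊆ ⋃ v ∈ Finset.range b, {k | m k = v} := by
            intro k hk
            simp only [Set.mem_iUnion, Finset.mem_range]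
            exact ⟨m k, hk, rfl⟩
          exact Set.Finite.subset (Set.Finite.biUnion (Finset.range b).finite_toSet
            fun v _ => hfin v) this
        obtain ⟨N, hN⟩ := (Set.Finite.bddAbove this).imp fun N hN => hN
        refine ⟨N + 1, fun k hk => ?_⟩
        by_contra hlt
        exact absurd (hN (by simpa using Nat.lt_of_not_le hlt)) (by omega)
      obtain ⟨ψ, hψ, hψm⟩ := strictMono_subseq_of_tendsto_atTop hm_tendsto
      refine absurd ?_ (hno (m ∘ ψ) hψm y)
      have heq : f ∘ (m ∘ ψ) = g ∘ ψ := by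
        funext k; exact hfm (ψ k)
      rw [heq]; exact hgy.comp hψ.tendsto_atTop
  have hclosed : ∀ n, IsClosed (T n) := fun n => (hseq n).isClosed
  have hne : (⋂ n, T n).Nonempty := by
    apply IsCompact.nonempty_iInter_of_sequence_nonempty_isCompact_isClosed
    · intro n
      exact Set.image_mono (f := f) (Set.Ici_subset_Ici.mpr (Nat.le_succ n))
    · intro n; exact ⟨f n, n, Set.self_mem_Ici, rfl⟩
    · exact (hclosed 0).isCompact
    · exact hclosed
  obtain ⟨p, hp⟩ := hne
  have hfreq : ∃ᶠ n in atTop, f n = p := by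
    rw [frequently_atTop]
    intro a
    obtain ⟨n, hn, hfn⟩ := Set.mem_iInter.mp hp a
    exact ⟨n, hn, hfn⟩
  obtain ⟨ψ, hψ, hψp⟩ := extraction_of_frequently_atTop hfreq
  refine hno ψ hψ p ?_
  have heq : f ∘ ψ = fun _ => p := funext hψp
  rw [heq]; exact tendsto_const_nhds

/-- In a compact Hausdorff sequential space, if every injective convergent sequence of
points of a countably infinite set `c` converges to `x`, then `c` itself converges
to `x`. -/
theorem stmt11 {X : Type*} [TopologicalSpace X] [CompactSpace X] [T2Space X]
    [SequentialSpace X] (c : Set X) (hc : c.Countable) (hinf : c.Infinite) (x : X)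
    (h : ∀ f : ℕ → X, Function.Injective f → (∀ n, f n ∈ c) →
      ∀ y : X, Tendsto f atTop (nhds y) → y = x) :
    SetConvergesTo c x := by
  intro U hU
  by_contra hfin
  set V := interior U with hV
  have hVx : x ∈ V := mem_interior_iff_mem_nhds.mpr hU
  have hAinf : (c \ V).Infinite := by
    intro hA
    exact hfin (hA.subset (Set.diff_subset_diff_right interior_subset))
  have hAcount : (c \ V).Countable := hc.mono Set.diff_subset
  set g : ℕ ↪ (c \ V : Set X) := Set.Infinite.natEmbedding _ hAinf with hg
  set f : ℕ → X := fun n => (g n : X) with hf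
  have hfinj : Function.Injective f := fun a b hab =>
    g.injective (Subtype.ext hab)
  have hfmem : ∀ n, f n ∈ c \ V := fun n => (g n).2
  obtain ⟨φ, hφ, y, hy⟩ := aux_seq_compact f
  have hyx : y = x := h (f ∘ φ) (hfinj.comp hφ.injective)
    (fun n => (hfmem (φ n)).1) y hy
  have hyV : y ∈ Vᶜ := by
    refine isOpen_interior.isClosed_compl.mem_of_tendsto hy ?_
    exact Eventually.of_forall fun n => (hfmem (φ n)).2
  exact hyV (hyx ▸ hVx)
end

section
/- Let X be a regular Hausdorff space, D a countable subset of X, and z ∈ X. Suppose for each α < ω₁ we are given infinite sets a_α, b_α ⊆ D with a_α ∩ b_α = ∅ and a point y_α ∈ X such that: (i) the set a_α converges to z; (ii) the set b_α converges to y_α; and (iii) for all distinct α, β < ω₁ the set (a_α ∩ b_β) ∪ (a_β ∩ b_α) is non-empty. Then the ω₁-sequence ⟨y_α : α < ω₁⟩ converges to z. -/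
open Ordinal Topology

lemma Omega1.exists_gt_of_countable_s13 (S : Set Omega1) (hS : S.Countable) :
    ∃ b : Omega1, ∀ s ∈ S, s < b := by
  by_contra! hne
  have hcof := Order.cof_le (show IsCofinal S from hne)
  rw [Ordinal.cof_toType, Cardinal.cof_omega_one] at hcof
  exact (hcof.trans hS.le_aleph0).not_gt Cardinal.aleph0_lt_aleph_one

lemma convergesTo_of_countable_setOf_notMem {X : Type*} [TopologicalSpace X]
    {x : Omega1 → X} {p : X} (h : ∀ U ∈ 𝓝 p, {γ | x γ ∉ U}.Countable) :
    ConvergesTo x p := by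
  intro U hU
  obtain ⟨α, hα⟩ := Omega1.exists_gt_of_countable_s13 _ (h U hU)
  exact ⟨α, fun β hαβ => by_contra fun hβ => (hα β hβ).not_ge hαβ⟩

lemma SetConvergesTo.finite_inter_of_isClosed {X : Type*} [TopologicalSpace X]
    {A C : Set X} {q : X} (hA : SetConvergesTo A q) (hC : IsClosed C) (hq : q ∉ C) :
    (A ∩ C).Finite := by
  simpa only [Set.sdiff_compl] using hA Cᶜ (hC.isOpen_compl.mem_nhds hq)

lemma Set.inter_eq_empty_of_inter_eq_of_diff_eq {X : Type*} {a₁ b₁ a₂ b₂ C : Set X}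
    (h₁ : a₁ ∩ b₁ = ∅) (h₂ : a₂ ∩ b₂ = ∅) (hb : b₁ ∩ C = b₂ ∩ C)
    (ha : a₁ \ C = a₂ \ C) : a₁ ∩ b₂ = ∅ := by
  refine Set.eq_empty_of_forall_notMem fun x ⟨hxa, hxb⟩ => ?_
  by_cases hxC : x ∈ C
  · have : x ∈ b₁ ∩ C := hb ▸ ⟨hxb, hxC⟩
    exact Set.eq_empty_iff_forall_notMem.1 h₁ x ⟨hxa, this.1⟩
  · have : x ∈ a₂ \ C := ha ▸ ⟨hxa, hxC⟩
    exact Set.eq_empty_iff_forall_notMem.1 h₂ x ⟨this.1, hxb⟩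

lemma injective_inter_diff_of_linked {ι X : Type*} {a b : ι → Set X} (C : Set X)
    (hdisj : ∀ α, a α ∩ b α = ∅)
    (hlink : ∀ α β : ι, α ≠ β → ((a α ∩ b β) ∪ (a β ∩ b α)).Nonempty) :
    Function.Injective fun γ => (b γ ∩ C, a γ \ C) := by
  intro α β hαβ
  obtain ⟨hb, ha⟩ := Prod.mk.inj hαβ
  by_contra hne
  have hlinked := hlink α β hne
  rw [Set.inter_eq_empty_of_inter_eq_of_diff_eq (hdisj α) (hdisj β) hb ha,
    Set.inter_eq_empty_of_inter_eq_of_diff_eq (hdisj β) (hdisj α) hb.symm ha.symm,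
    Set.union_self] at hlinked
  exact Set.not_nonempty_empty hlinked

theorem stmt13_general {X : Type*} [TopologicalSpace X] [RegularSpace X]
    (D : Set X) (hD : D.Countable) (z : X)
    (a b : Omega1 → Set X) (y : Omega1 → X)
    (ha : ∀ α, (a α).Infinite ∧ a α ⊆ D)
    (hb : ∀ α, (b α).Infinite ∧ b α ⊆ D)
    (hdisj : ∀ α, a α ∩ b α = ∅)
    (hca : ∀ α, SetConvergesTo (a α) z)
    (hcb : ∀ α, SetConvergesTo (b α) (y α))
    (hlink : ∀ α β : Omega1, α ≠ β → ((a α ∩ b β) ∪ (a β ∩ b α)).Nonempty) :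
    ConvergesTo y z := by
  refine convergesTo_of_countable_setOf_notMem fun U hU => ?_
  obtain ⟨C, hCz, hC, hCU⟩ := exists_mem_nhds_isClosed_subset hU
  let finSubsets : Set (Set X) := {t | t.Finite ∧ t ⊆ D}
  have hmaps : Set.MapsTo (fun γ => (b γ ∩ C, a γ \ C)) {γ | y γ ∉ U}
      (finSubsets ×ˢ finSubsets) := fun γ hγ =>
    ⟨⟨(hcb γ).finite_inter_of_isClosed hC (fun h => hγ (hCU h)),
        Set.inter_subset_left.trans (hb γ).2⟩,
      hca γ C hCz, Set.sdiff_subset.trans (ha γ).2⟩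
  have hfin : (finSubsets ×ˢ finSubsets).Countable :=
    (Set.countable_ofPred_finite_subset hD).prod (Set.countable_ofPred_finite_subset hD)
  exact hmaps.countable_of_injOn (injective_inter_diff_of_linked C hdisj hlink).injOn hfin

/-- In a regular Hausdorff space, given disjoint pairs `a_α`, `b_α` of infinite subsets
of a countable set `D` with `a_α → z`, `b_α → y_α`, such that the pairs are pairwise
"linked", the sequence `⟨y_α : α < ω₁⟩` converges to `z`. -/
theorem stmt13 {X : Type*} [TopologicalSpace X] [T2Space X] [RegularSpace X]
    (D : Set X) (hD : D.Countable) (z : X)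
    (a b : Omega1 → Set X) (y : Omega1 → X)
    (ha : ∀ α, (a α).Infinite ∧ a α ⊆ D)
    (hb : ∀ α, (b α).Infinite ∧ b α ⊆ D)
    (hdisj : ∀ α, a α ∩ b α = ∅)
    (hca : ∀ α, SetConvergesTo (a α) z)
    (hcb : ∀ α, SetConvergesTo (b α) (y α))
    (hlink : ∀ α β : Omega1, α ≠ β → ((a α ∩ b β) ∪ (a β ∩ b α)).Nonempty) :
    ConvergesTo y z :=
  stmt13_general D hD z a b y ha hb hdisj hca hcb hlink
end
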